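/- arXiv:2304.02882 — 3 statements merged into one kernel-verified Lean document; each statement's English description precedes it below -/
import Mathlib

section
/- Let $n \geq 1$, let $\mathtt{a} \in (0,1]$, and let $x_1,\ldots,x_n$ be nonnegative real numbers, not all zero. Then there exists an index $k \in \{1,\ldots,n\}$ such that $x_k \neq 0$, and $x_i/x_k \leq \mathtt{a}^{-n}$ for all $1 \leq i \leq k$, and $x_i/x_k \leq \mathtt{a}$ for all $k < i \leq n$. -/
theorem stmt0 (n : ℕ) (hn : 1 ≤ n) (a : ℝ) (ha0 : 0 < a) (ha1 : a ≤ 1)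
    (x : Fin n → ℝ) (hx : ∀ i, 0 ≤ x i) (hx0 : ∃ i, x i ≠ 0) :
    ∃ k : Fin n, x k ≠ 0 ∧ (∀ i, i ≤ k → x i / x k ≤ a ^ (-(n : ℤ))) ∧
      (∀ i, k < i → x i / x k ≤ a) := by
  haveI : Nonempty (Fin n) := ⟨⟨0, hn⟩⟩
  obtain ⟨k, hk⟩ := Finite.exists_max (fun i : Fin n => x i * a ^ (-(i : ℤ)))
  obtain ⟨j, hj⟩ := hx0
  have hxj : 0 < x j := lt_of_le_of_ne (hx j) (Ne.symm hj)
  have hfk : 0 < x k * a ^ (-(k : ℤ)) :=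
    lt_of_lt_of_le (mul_pos hxj (zpow_pos ha0 _)) (hk j)
  have hxk : 0 < x k := by
    by_contra h
    have : x k = 0 := le_antisymm (not_lt.mp h |>.trans_eq rfl) (hx k)
    simp [this] at hfk
  have key : ∀ i : Fin n, x i / x k ≤ a ^ ((i : ℤ) - (k : ℤ)) := by
    intro i
    rw [div_le_iff₀ hxk]
    have h := hk i
    have hpos : (0:ℝ) < a ^ (-(i : ℤ)) := zpow_pos ha0 _
    rw [← mul_le_mul_iff_left₀ hpos]
    calc x i * a ^ (-(i:ℤ)) ≤ x k * a ^ (-(k:ℤ)) := h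
      _ = a ^ ((i:ℤ) - (k:ℤ)) * x k * a ^ (-(i:ℤ)) := by
          have h2 : a ^ ((i:ℤ)-(k:ℤ)) * a ^ (-(i:ℤ)) = a ^ (-(k:ℤ)) := by
            rw [← zpow_add₀ (ne_of_gt ha0)]; ring_nf
          rw [← h2]; ring
  refine ⟨k, ne_of_gt hxk, ?_, ?_⟩
  · intro i hik
    refine (key i).trans (zpow_le_zpow_right_of_le_one₀ ha0 ha1 ?_)
    have : (k : ℤ) < n := by exact_mod_cast k.2
    have : (i : ℤ) ≤ k := by exact_mod_cast hik
    omega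
  · intro i hki
    refine (key i).trans ?_
    have : (k : ℤ) < i := by exact_mod_cast hki
    calc a ^ ((i:ℤ) - (k:ℤ)) ≤ a ^ (1:ℤ) :=
          zpow_le_zpow_right_of_le_one₀ ha0 ha1 (by omega)
      _ = a := zpow_one a
end

section
/- Fix a vector $\vec{n} = (n_1, \ldots, n_d)$ of positive integers, let $\mathtt N = \max_i n_i$ and $\mathtt S = n_1 + \cdots + n_d$. For $j \in \mathbb{Z}$ let $\mathcal{D}_j$ be the collection of half-open boxes $a + \prod_{i=1}^d [0, 2^{-n_i j})$ with $a \in \prod_{i=1}^d 2^{-n_i j}\mathbb{Z}$, let $\mathcal{D}^* = \bigcup_{j \in \mathbb{Z}} \mathcal{D}_j$, and for $Q \in \mathcal{D}_j$ set $\ell(Q) = 2^{-j}$. Define $\mathcal{H}^s_{\mathcal{D}^*}(E) = \inf\{\sum_{Q \in \mathcal{Q}} \ell(Q)^s : \mathcal{Q} \subseteq \mathcal{D}^* \text{ countable}, E \subseteq \bigcup \mathcal{Q}\}$. Then for every set $E \subseteq \mathbb{R}^d$ and every $s$ with $0 \leq s < \mathtt S - (d - \dim_{\mathrm H} E)\mathtt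 N$, one has $\mathcal{H}^s_{\mathcal{D}^*}(E) > 0$. -/
open scoped ENNReal
open MeasureTheory

noncomputable section

/-- The anisotropic dyadic box of generation `j` anchored at lattice point `a`. -/
def dyadicBox (d : ℕ) (n : Fin d → ℕ) (j : ℤ) (a : Fin d → ℤ) : Set (Fin d → ℝ) :=
  {x | ∀ i, (a i : ℝ) * (2 : ℝ) ^ (-(n i : ℤ) * j) ≤ x i ∧
        x i < ((a i : ℝ) + 1) * (2 : ℝ) ^ (-(n i : ℤ) * j)}

/-- The cost `ℓ(Q)^s = (2^{-j})^s` of a box of generation `j`. -/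
def boxCost (s : ℝ) (j : ℤ) : ℝ≥0∞ := ENNReal.ofReal (((2 : ℝ) ^ (-j : ℤ)) ^ s)

/-- The anisotropic dyadic Hausdorff content, with generations restricted to the
predicate `P`. -/
def anisoContentOn (d : ℕ) (n : Fin d → ℕ) (P : ℤ → Prop) (s : ℝ)
    (E : Set (Fin d → ℝ)) : ℝ≥0∞ :=
  ⨅ (𝒬 : Set (ℤ × (Fin d → ℤ))) (_ : 𝒬.Countable) (_ : ∀ p ∈ 𝒬, P p.1)
    (_ : E ⊆ ⋃ p ∈ 𝒬, dyadicBox d n p.1 p.2),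
      ∑' p : 𝒬, boxCost s (p : ℤ × (Fin d → ℤ)).1

end

private lemma boxCost_eq (s : ℝ) (j : ℤ) :
    boxCost s j = ENNReal.ofReal ((2:ℝ) ^ ((-(j:ℝ)) * s)) := by
  unfold boxCost
  congr 1
  rw [show (-(j:ℝ)) = ((-j : ℤ) : ℝ) by push_cast; ring,
    Real.rpow_intCast_mul (by norm_num : (0:ℝ) ≤ 2)]

private lemma ofReal_two_zpow_neg (m : ℕ) :
    ENNReal.ofReal ((2:ℝ) ^ (-(m:ℤ))) = (2:ℝ≥0∞)⁻¹ ^ m := by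
  rw [zpow_neg, ← inv_zpow, zpow_natCast, ENNReal.ofReal_pow (by norm_num)]
  congr 1
  rw [show ((2:ℝ)⁻¹) = (2:ℝ)⁻¹ from rfl, ENNReal.ofReal_inv_of_pos (by norm_num : (0:ℝ) < 2)]
  norm_num

private lemma dyadicBox_eq_pi (d : ℕ) (n : Fin d → ℕ) (j : ℤ) (a : Fin d → ℤ) :
    dyadicBox d n j a = Set.pi Set.univ
      (fun i => Set.Ico ((a i : ℝ) * (2:ℝ) ^ (-(n i : ℤ) * j))
        (((a i : ℝ) + 1) * (2:ℝ) ^ (-(n i : ℤ) * j))) := by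
  ext x; simp [dyadicBox, Set.mem_pi, Set.mem_Ico]

private lemma diam_dyadicBox_le (d : ℕ) (N : ℕ) (j : ℤ) (a : Fin d → ℤ) :
    EMetric.diam (dyadicBox d (fun _ => N) j a)
      ≤ ENNReal.ofReal ((2:ℝ) ^ (-(N : ℤ) * j)) := by
  rw [dyadicBox_eq_pi]
  refine EMetric.diam_pi_le_of_le fun i => ?_
  rw [Real.ediam_Ico]
  apply ENNReal.ofReal_le_ofReal
  have : ((a i : ℝ) + 1) * (2:ℝ) ^ (-(N:ℤ) * j) - (a i : ℝ) * (2:ℝ) ^ (-(N:ℤ) * j)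
      = (2:ℝ) ^ (-(N:ℤ) * j) := by ring
  rw [this]

private lemma two_zpow_split {N ni : ℕ} (hni : ni ≤ N) {j : ℤ} (hj : 0 ≤ j) :
    ((2 ^ ((N - ni) * j.toNat) : ℕ) : ℝ) * (2:ℝ) ^ (-(N:ℤ) * j)
      = (2:ℝ) ^ (-(ni:ℤ) * j) := by
  have h1 : ((2 ^ ((N - ni) * j.toNat) : ℕ) : ℝ) = (2:ℝ) ^ ((((N - ni) * j.toNat : ℕ)) : ℤ) := by
    rw [Nat.cast_pow, zpow_natCast]
    norm_num
  rw [h1, ← zpow_add₀ (by norm_num : (2:ℝ) ≠ 0)]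
  congr 1
  have h2 : (((N - ni) * j.toNat : ℕ) : ℤ) = ((N : ℤ) - ni) * j := by
    push_cast [Nat.cast_sub hni]
    rw [Int.toNat_of_nonneg hj]
  rw [h2]; ring

private lemma coord_split {u : ℝ} (hu : 0 < u) (M : ℕ) (c : ℤ) {x : ℝ}
    (h1 : (c:ℝ) * ((M:ℝ) * u) ≤ x) (h2 : x < ((c:ℝ) + 1) * ((M:ℝ) * u)) :
    c * M ≤ ⌊x / u⌋ ∧ ⌊x / u⌋ < c * M + M ∧
      (⌊x / u⌋ : ℝ) * u ≤ x ∧ x < ((⌊x / u⌋ : ℝ) + 1) * u := by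
  refine ⟨?_, ?_, ?_, ?_⟩
  · rw [Int.le_floor]
    rw [le_div_iff₀ hu]
    push_cast
    nlinarith
  · rw [Int.floor_lt]
    rw [div_lt_iff₀ hu]
    push_cast
    nlinarith
  · have := Int.floor_le (x / u)
    calc (⌊x / u⌋ : ℝ) * u ≤ (x / u) * u := by nlinarith
      _ = x := by field_simp
  · have := Int.lt_floor_add_one (x / u)
    calc x = (x / u) * u := by field_simp
      _ < ((⌊x / u⌋ : ℝ) + 1) * u := by nlinarith

private lemma dyadicBox_subset_iUnion (d N : ℕ) (n : Fin d → ℕ) (hNmax : ∀ i, n i ≤ N)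
    (j : ℤ) (hj : 0 ≤ j) (a : Fin d → ℤ) :
    dyadicBox d n j a ⊆
      ⋃ b : (∀ i, Fin (2 ^ ((N - n i) * j.toNat))),
        dyadicBox d (fun _ => N) j
          (fun i => a i * (2 ^ ((N - n i) * j.toNat) : ℕ) + (b i : ℤ)) := by
  intro x hx
  set u : ℝ := (2:ℝ) ^ (-(N:ℤ) * j) with hu_def
  have hu : 0 < u := by positivity
  have key : ∀ i, a i * (2 ^ ((N - n i) * j.toNat) : ℕ) ≤ ⌊x i / u⌋ ∧
      ⌊x i / u⌋ < a i * (2 ^ ((N - n i) * j.toNat) : ℕ) + (2 ^ ((N - n i) * j.toNat) : ℕ) ∧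
      (⌊x i / u⌋ : ℝ) * u ≤ x i ∧ x i < ((⌊x i / u⌋ : ℝ) + 1) * u := by
    intro i
    have hsplit := two_zpow_split (hNmax i) hj
    have h1 := (hx i).1
    have h2 := (hx i).2
    rw [← hsplit] at h1 h2
    exact coord_split hu _ (a i) h1 h2
  have hbpos : ∀ i, (0:ℤ) ≤ ⌊x i / u⌋ - a i * (2 ^ ((N - n i) * j.toNat) : ℕ) := by
    intro i; have := (key i).1; omega
  have hblt : ∀ i, (⌊x i / u⌋ - a i * (2 ^ ((N - n i) * j.toNat) : ℕ)).toNat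
      < 2 ^ ((N - n i) * j.toNat) := by
    intro i
    have h1 := (key i).1
    have h2 := (key i).2.1
    omega
  refine Set.mem_iUnion.2 ⟨fun i => ⟨_, hblt i⟩, fun i => ?_⟩
  have heq : a i * ((2 ^ ((N - n i) * j.toNat) : ℕ) : ℤ) +
      (((⌊x i / u⌋ - a i * (2 ^ ((N - n i) * j.toNat) : ℕ)).toNat : ℕ) : ℤ) = ⌊x i / u⌋ := by
    have := hbpos i; omega
  constructor
  · simp only [heq]
    exact (key i).2.2.1
  · simp only [heq]
    exact (key i).2.2.2

private lemma tsum_subbox_le (d N S : ℕ) (n : Fin d → ℕ)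
    (hNmax : ∀ i, n i ≤ N) (hS : S = ∑ i, n i) (s t : ℝ) (hs0 : 0 ≤ s) (ht0 : 0 ≤ t)
    (hts : (d:ℝ) * N - S + s ≤ (N:ℝ) * t) (j : ℤ) (hj : 1 ≤ j) (a : Fin d → ℤ) :
    ∑' b : (∀ i, Fin (2 ^ ((N - n i) * j.toNat))),
      EMetric.diam (dyadicBox d (fun _ => N) j
        (fun i => a i * (2 ^ ((N - n i) * j.toNat) : ℕ) + (b i : ℤ))) ^ t
      ≤ boxCost s j := by
  have hjr : (0:ℝ) ≤ j := by exact_mod_cast (by omega : (0:ℤ) ≤ j)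
  set C : ℝ≥0∞ := ENNReal.ofReal ((2:ℝ) ^ ((-(N:ℝ) * j) * t)) with hC_def
  have hterm : ∀ b : (∀ i, Fin (2 ^ ((N - n i) * j.toNat))),
      EMetric.diam (dyadicBox d (fun _ => N) j
        (fun i => a i * (2 ^ ((N - n i) * j.toNat) : ℕ) + (b i : ℤ))) ^ t ≤ C := by
    intro b
    have h1 := diam_dyadicBox_le d N j
      (fun i => a i * (2 ^ ((N - n i) * j.toNat) : ℕ) + (b i : ℤ))
    have h2 := ENNReal.rpow_le_rpow h1 ht0
    refine h2.trans_eq ?_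
    rw [ENNReal.ofReal_rpow_of_pos (by positivity)]
    congr 1
    rw [show (-(N:ℝ) * j) = ((-(N:ℤ) * j : ℤ) : ℝ) by push_cast; ring,
      Real.rpow_intCast_mul (by norm_num : (0:ℝ) ≤ 2)]
  set K : ℕ := ∑ i, (N - n i) * j.toNat with hK_def
  have hcard : Fintype.card (∀ i, Fin (2 ^ ((N - n i) * j.toNat))) = 2 ^ K := by
    rw [Fintype.card_pi]
    simp only [Fintype.card_fin]
    rw [Finset.prod_pow_eq_pow_sum]
  have hKr : (K:ℝ) = (j:ℝ) * ((d:ℝ) * N - S) := by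
    have h1 : (K:ℝ) = ∑ i, ((N:ℝ) - n i) * (j.toNat : ℝ) := by
      rw [hK_def, Nat.cast_sum]
      refine Finset.sum_congr rfl fun i _ => ?_
      rw [Nat.cast_mul, Nat.cast_sub (hNmax i)]
    have hjn : ((j.toNat : ℕ) : ℝ) = (j:ℝ) := by
      have := Int.toNat_of_nonneg (by omega : (0:ℤ) ≤ j)
      exact_mod_cast congrArg (Int.cast : ℤ → ℝ) this
    rw [h1]
    rw [← Finset.sum_mul, hjn, Finset.sum_sub_distrib]
    simp only [Finset.sum_const, Finset.card_univ, Fintype.card_fin, nsmul_eq_mul]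
    rw [hS]
    push_cast
    ring
  calc ∑' b : (∀ i, Fin (2 ^ ((N - n i) * j.toNat))),
        EMetric.diam (dyadicBox d (fun _ => N) j
          (fun i => a i * (2 ^ ((N - n i) * j.toNat) : ℕ) + (b i : ℤ))) ^ t
      ≤ ∑' _b : (∀ i, Fin (2 ^ ((N - n i) * j.toNat))), C := ENNReal.tsum_le_tsum hterm
    _ = (2 ^ K : ℕ) * C := by
        rw [tsum_fintype]
        simp [hcard, Finset.sum_const, nsmul_eq_mul]
    _ ≤ boxCost s j := by
        rw [boxCost_eq, hC_def,
          show ((2 ^ K : ℕ) : ℝ≥0∞) = ENNReal.ofReal ((2 ^ K : ℕ) : ℝ) by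
            rw [ENNReal.ofReal_natCast],
          ← ENNReal.ofReal_mul (by positivity)]
        apply ENNReal.ofReal_le_ofReal
        have hcast : ((2 ^ K : ℕ) : ℝ) = (2:ℝ) ^ (K:ℝ) := by
          rw [Real.rpow_natCast]; push_cast; ring
        rw [hcast, ← Real.rpow_add (by norm_num : (0:ℝ) < 2)]
        rw [Real.rpow_le_rpow_left_iff (by norm_num : (1:ℝ) < 2)]
        rw [hKr]
        have haux : (j:ℝ) * ((d:ℝ) * N - S + s) ≤ (j:ℝ) * ((N:ℝ) * t) :=
          mul_le_mul_of_nonneg_left hts hjr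
        have hj1 : (1:ℝ) ≤ (j:ℝ) := by exact_mod_cast hj
        nlinarith [haux]

theorem stmt5 (d : ℕ) (hd : 0 < d) (n : Fin d → ℕ) (hn : ∀ i, 1 ≤ n i)
    (N S : ℕ) (hNmax : ∀ i, n i ≤ N) (hNmem : ∃ i, n i = N) (hS : S = ∑ i, n i)
    (E : Set (Fin d → ℝ)) (s : ℝ) (hs0 : 0 ≤ s)
    (hs : ENNReal.ofReal s + ((d : ℝ≥0∞) - dimH E) * (N : ℝ≥0∞) < (S : ℝ≥0∞)) :
    0 < anisoContentOn d n (fun _ => True) s E := by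
  classical
  have hN1 : 1 ≤ N := by obtain ⟨i, hi⟩ := hNmem; exact hi ▸ hn i
  have hNpos : (0:ℝ) < N := by exact_mod_cast hN1
  have hS1 : 1 ≤ S := by
    rw [hS]
    calc 1 ≤ d := hd
      _ = ∑ _i : Fin d, 1 := by simp
      _ ≤ ∑ i, n i := Finset.sum_le_sum fun i _ => hn i
  have hSdN : S ≤ d * N := by
    rw [hS]
    calc ∑ i, n i ≤ ∑ _i : Fin d, N := Finset.sum_le_sum fun i _ => hNmax i
      _ = d * N := by simp [mul_comm]
  -- s < S
  have hsS : s < (S:ℝ) := by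
    have h1 : ENNReal.ofReal s < (S:ℝ≥0∞) := lt_of_le_of_lt le_self_add hs
    rw [← ENNReal.ofReal_natCast S,
      ENNReal.ofReal_lt_ofReal_iff (by exact_mod_cast (by omega : 0 < S) : (0:ℝ) < S)] at h1
    exact h1
  have hD0 : 0 < dimH E := by
    by_contra h
    push_neg at h
    have hD : dimH E = 0 := le_antisymm h zero_le
    rw [hD, tsub_zero] at hs
    have h2 : (S:ℝ≥0∞) ≤ (d:ℝ≥0∞) * N := by exact_mod_cast Nat.cast_le.2 hSdN
    exact absurd hs (not_lt.2 (h2.trans le_add_self))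
  set t0 : ℝ := ((d:ℝ) * N - S + s) / N with ht0_def
  have hkey : ENNReal.ofReal (max t0 0) < dimH E := by
    rcases le_or_gt t0 0 with h | h
    · simpa [max_eq_right h] using hD0
    · rw [max_eq_left h.le]
      by_contra hc
      push_neg at hc
      have h3 : (d:ℝ≥0∞) - ENNReal.ofReal t0 = ENNReal.ofReal ((d:ℝ) - t0) := by
        rw [← ENNReal.ofReal_natCast d, ← ENNReal.ofReal_sub _ h.le]
      have h6 : ENNReal.ofReal ((S:ℝ) - s) ≤ ((d:ℝ≥0∞) - dimH E) * N := by
        have h2 : (d:ℝ≥0∞) - ENNReal.ofReal t0 ≤ (d:ℝ≥0∞) - dimH E := tsub_le_tsub_left hc _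
        have h5 : ((d:ℝ) - t0) * N = (S:ℝ) - s := by
          rw [ht0_def]; field_simp; ring
        calc ENNReal.ofReal ((S:ℝ) - s) = ENNReal.ofReal (((d:ℝ) - t0) * N) := by rw [h5]
          _ = ENNReal.ofReal ((d:ℝ) - t0) * ENNReal.ofReal (N:ℝ) := by
              rw [ENNReal.ofReal_mul (by nlinarith)]
          _ = ((d:ℝ≥0∞) - ENNReal.ofReal t0) * N := by rw [h3, ENNReal.ofReal_natCast]
          _ ≤ ((d:ℝ≥0∞) - dimH E) * N := by
              exact mul_le_mul_left h2 _
      have h7 : (S:ℝ≥0∞) ≤ ENNReal.ofReal s + ((d:ℝ≥0∞) - dimH E) * N := by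
        calc (S:ℝ≥0∞) = ENNReal.ofReal s + ENNReal.ofReal ((S:ℝ) - s) := by
              rw [← ENNReal.ofReal_add hs0 (by linarith), ← ENNReal.ofReal_natCast S]
              congr 1; ring
          _ ≤ _ := add_le_add_right h6 _
      exact absurd hs (not_lt.2 h7)
  obtain ⟨t, htl, htu⟩ := ENNReal.lt_iff_exists_nnreal_btwn.mp hkey
  have ht_real : max t0 0 < (t:ℝ) := by
    rw [← ENNReal.ofReal_coe_nnreal] at htl
    exact (ENNReal.ofReal_lt_ofReal_iff_of_nonneg (le_max_right _ _)).mp htl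
  have htpos : (0:ℝ) < t := lt_of_le_of_lt (le_max_right t0 0) ht_real
  have hts : (d:ℝ) * N - S + s ≤ (N:ℝ) * t := by
    have h1 : t0 ≤ (t:ℝ) := le_trans (le_max_left _ _) ht_real.le
    rw [ht0_def, div_le_iff₀ hNpos] at h1
    linarith
  rcases eq_or_lt_of_le hs0 with hs0' | hspos
  · -- s = 0
    have hE : E.Nonempty := by
      rw [Set.nonempty_iff_ne_empty]
      intro hE
      rw [hE, dimH_empty] at hD0
      exact lt_irrefl _ hD0
    refine lt_of_lt_of_le zero_lt_one ?_
    unfold anisoContentOn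
    refine le_iInf fun 𝒬 => le_iInf fun hc => le_iInf fun _ => le_iInf fun hcov => ?_
    obtain ⟨x, hx⟩ := hE
    obtain ⟨Q, hQ, hxQ⟩ : ∃ Q ∈ 𝒬, x ∈ dyadicBox d n Q.1 Q.2 := by
      simpa using hcov hx
    have h1 : boxCost s Q.1 = 1 := by
      rw [← hs0']
      simp [boxCost, Real.rpow_zero]
    calc (1:ℝ≥0∞) = boxCost s Q.1 := h1.symm
      _ ≤ _ := ENNReal.le_tsum (⟨Q, hQ⟩ : 𝒬)
  · -- s > 0
    by_contra hpos
    have h0 : anisoContentOn d n (fun _ => True) s E = 0 := by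
      simpa [pos_iff_ne_zero] using hpos
    have hμ : μH[(t:ℝ)] E = ∞ := hausdorffMeasure_of_lt_dimH htu
    have key : ∀ m : ℕ, ∃ 𝒬 : Set (ℤ × (Fin d → ℤ)), 𝒬.Countable ∧
        (E ⊆ ⋃ p ∈ 𝒬, dyadicBox d n p.1 p.2) ∧
        (∀ p ∈ 𝒬, (m:ℤ) + 1 < p.1) ∧
        (∑' p : 𝒬, boxCost s (p : ℤ × (Fin d → ℤ)).1) ≤ boxCost s ((m:ℤ)+1) := by
      intro m
      have hεpos : 0 < boxCost s ((m:ℤ)+1) := by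
        unfold boxCost
        apply ENNReal.ofReal_pos.2
        positivity
      have hlt : anisoContentOn d n (fun _ => True) s E < boxCost s ((m:ℤ)+1) :=
        h0 ▸ hεpos
      unfold anisoContentOn at hlt
      simp only [iInf_lt_iff] at hlt
      obtain ⟨𝒬, hc, -, hcov, hsum⟩ := hlt
      refine ⟨𝒬, hc, hcov, ?_, hsum.le⟩
      intro p hp
      have h1 : boxCost s p.1 < boxCost s ((m:ℤ)+1) :=
        lt_of_le_of_lt (ENNReal.le_tsum (⟨p, hp⟩ : 𝒬)) hsum
      rw [boxCost_eq, boxCost_eq,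
        ENNReal.ofReal_lt_ofReal_iff (by positivity)] at h1
      rw [Real.rpow_lt_rpow_left_iff (by norm_num : (1:ℝ) < 2)] at h1
      have h2 : -(p.1:ℝ) < -(((m:ℤ)+1 : ℤ):ℝ) := by
        have := (mul_lt_mul_iff_left₀ hspos).mp h1
        exact this
      have h3 : (((m:ℤ)+1 : ℤ):ℝ) < (p.1:ℝ) := by linarith
      exact_mod_cast h3
    choose 𝒬 hcnt hcov hjlo hsum using key
    haveI : ∀ m, Countable (𝒬 m) := fun m => (hcnt m).to_subtype
    let ι : ℕ → Type := fun m =>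
      (Q : 𝒬 m) × (∀ i, Fin (2 ^ ((N - n i) * ((Q : ℤ × (Fin d → ℤ)).1).toNat)))
    haveI : ∀ m, Countable (ι m) := fun m => inferInstance
    let tt : ∀ m, ι m → Set (Fin d → ℝ) := fun m p =>
      dyadicBox d (fun _ => N) (p.1 : ℤ × (Fin d → ℤ)).1
        (fun i => (p.1 : ℤ × (Fin d → ℤ)).2 i *
          (2 ^ ((N - n i) * ((p.1 : ℤ × (Fin d → ℤ)).1).toNat) : ℕ) + (p.2 i : ℤ))
    have hjm : ∀ (m : ℕ) (Q : 𝒬 m), 1 ≤ (Q : ℤ × (Fin d → ℤ)).1 ∧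
        (m:ℤ) ≤ (Q : ℤ × (Fin d → ℤ)).1 := by
      intro m Q
      have := hjlo m _ Q.2
      omega
    have hdiam : ∀ (m : ℕ) (p : ι m), EMetric.diam (tt m p) ≤ (2:ℝ≥0∞)⁻¹ ^ m := by
      intro m p
      obtain ⟨hj1, hjm'⟩ := hjm m p.1
      refine (diam_dyadicBox_le d N _ _).trans ?_
      rw [← ofReal_two_zpow_neg m]
      apply ENNReal.ofReal_le_ofReal
      apply zpow_le_zpow_right₀ (by norm_num : (1:ℝ) ≤ 2)
      have h1 : (m:ℤ) ≤ (p.1 : ℤ × (Fin d → ℤ)).1 := hjm'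
      have h2 : (p.1 : ℤ × (Fin d → ℤ)).1 ≤ (N:ℤ) * (p.1 : ℤ × (Fin d → ℤ)).1 :=
        le_mul_of_one_le_left (by omega) (by exact_mod_cast hN1)
      linarith
    have hcover : ∀ m : ℕ, E ⊆ ⋃ i, tt m i := by
      intro m x hx
      obtain ⟨Q, hQ, hxQ⟩ : ∃ Q ∈ 𝒬 m, x ∈ dyadicBox d n Q.1 Q.2 := by
        simpa using hcov m hx
      have hj0 : (0:ℤ) ≤ Q.1 := by have := hjlo m Q hQ; omega
      obtain ⟨b, hb⟩ := Set.mem_iUnion.1 (dyadicBox_subset_iUnion d N n hNmax Q.1 hj0 Q.2 hxQ)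
      exact Set.mem_iUnion.2 ⟨⟨⟨Q, hQ⟩, b⟩, hb⟩
    have hsums : ∀ m : ℕ, (∑' i : ι m, EMetric.diam (tt m i) ^ (t:ℝ)) ≤ 1 := by
      intro m
      rw [ENNReal.tsum_sigma']
      calc (∑' Q : 𝒬 m, ∑' b : (∀ i, Fin (2 ^ ((N - n i) * ((Q : ℤ × (Fin d → ℤ)).1).toNat))),
            EMetric.diam (tt m ⟨Q, b⟩) ^ (t:ℝ))
          ≤ ∑' Q : 𝒬 m, boxCost s (Q : ℤ × (Fin d → ℤ)).1 := by
            refine ENNReal.tsum_le_tsum fun Q => ?_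
            exact tsum_subbox_le d N S n hNmax hS s t hspos.le htpos.le hts
              (Q : ℤ × (Fin d → ℤ)).1 (hjm m Q).1 (Q : ℤ × (Fin d → ℤ)).2
        _ ≤ boxCost s ((m:ℤ)+1) := hsum m
        _ ≤ 1 := by
            rw [boxCost_eq]
            apply ENNReal.ofReal_le_one.2
            apply Real.rpow_le_one_of_one_le_of_nonpos (by norm_num)
            have : (0:ℝ) ≤ ((m:ℤ)+1 : ℤ) := by positivity
            nlinarith [hspos]
    have hmain := MeasureTheory.Measure.hausdorffMeasure_le_liminf_tsum (t:ℝ) E (fun m => (2:ℝ≥0∞)⁻¹ ^ m)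
      (ENNReal.tendsto_pow_atTop_nhds_zero_of_lt_one (by norm_num)) tt
      (Filter.Eventually.of_forall hdiam) (Filter.Eventually.of_forall hcover)
    have hle1 : Filter.liminf (fun m => ∑' i : ι m, EMetric.diam (tt m i) ^ (t:ℝ))
        Filter.atTop ≤ 1 :=
      Filter.liminf_le_of_frequently_le' (Filter.Frequently.of_forall hsums)
    rw [hμ] at hmain
    exact absurd (hmain.trans hle1) (by norm_num)
end

section
/- Let $\Theta : \mathtt I \to \mathbb{R}^d$ be a smooth function on a compact interval $\mathtt I \ni 0$ that is vanishing of finite type $\mathtt N$ at the origin: $\Theta(0) = 0$ and for every nonzero $u \in \mathbb{R}^d$ there exists $n \in \{1,\ldots,\mathtt N\}$ with $u \cdot \Theta^{(n)}(0) \neq 0$. Then there exists an invertible linear map $\mathbf{L} : \mathbb{R}^d \to \mathbb{R}^d$ such that $\Phi := \mathbf{L} \circ \Theta$ has components $\Phi_i(t) = t^{\mathtt n_i}\phi_i(t)$ where $1 \leq \mathtt n_1 < \mathtt n_2 < \cdots < \mathtt n_d = \mathtt N$ are integers and the $\phi_i$ are smooth functions with $\phi_i(0) = 1$. -/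
open Set Filter Function
open scoped ContDiff Topology

private lemma iteratedDerivWithin_clm_comp {d : ℕ} (ℓ : (Fin d → ℝ) →L[ℝ] ℝ)
    {Θ : ℝ → Fin d → ℝ} {s : Set ℝ} (hΘ : ContDiffOn ℝ (⊤ : ℕ∞) Θ s) (hs : UniqueDiffOn ℝ s)
    {x : ℝ} (hx : x ∈ s) (k : ℕ) :
    iteratedDerivWithin k (fun t => ℓ (Θ t)) s x = ℓ (iteratedDerivWithin k Θ s x) := by
  have h := ℓ.iteratedFDerivWithin_comp_left (hΘ x hx) hs hx (i := k) (by exact_mod_cast le_top)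
  have h2 : iteratedDerivWithin k (fun t => ℓ (Θ t)) s x
      = iteratedFDerivWithin ℝ k (ℓ ∘ Θ) s x (fun _ => 1) := by
    rw [iteratedDerivWithin_eq_iteratedFDerivWithin]; rfl
  rw [h2, h]
  rw [iteratedDerivWithin_eq_iteratedFDerivWithin]
  rfl

private lemma exists_flag_basis {d : ℕ} (hd : 0 < d) (N : ℕ) (hN : 1 ≤ N)
    (v : ℕ → (Fin d → ℝ))
    (htop : Submodule.span ℝ (v '' Set.Icc 1 N) = ⊤)
    (hproper : Submodule.span ℝ (v '' Set.Icc 1 (N - 1)) ≠ ⊤) :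
    ∃ (nv : Fin d → ℕ) (bs : Module.Basis (Fin d) ℝ (Fin d → ℝ)),
      StrictMono nv ∧ (∀ i, 1 ≤ nv i) ∧ (∀ i, nv i ≤ N) ∧ (∃ i, nv i = N) ∧
      (∀ i, bs i = v (nv i)) ∧
      (∀ i k, 1 ≤ k → k < nv i → bs.repr (v k) i = 0) := by
  classical
  let W : ℕ → Submodule ℝ (Fin d → ℝ) := fun k => Submodule.span ℝ (v '' Set.Icc 1 k)
  let r : ℕ → ℕ := fun k => Module.finrank ℝ (W k)
  have hIcc : ∀ k : ℕ, Set.Icc 1 (k+1) = insert (k+1) (Set.Icc 1 k) := by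
    intro k; ext j; simp only [Set.mem_Icc, Set.mem_insert_iff]; omega
  have hWsucc : ∀ k, W (k+1) = Submodule.span ℝ {v (k+1)} ⊔ W k := by
    intro k
    show Submodule.span ℝ (v '' Set.Icc 1 (k+1)) = _
    rw [hIcc k, Set.image_insert_eq, Submodule.span_insert]
  have hWmono : ∀ {k l : ℕ}, k ≤ l → W k ≤ W l := by
    intro k l hkl
    exact Submodule.span_mono (Set.image_mono (Set.Icc_subset_Icc le_rfl hkl))
  have hrmono : ∀ {k l : ℕ}, k ≤ l → r k ≤ r l := fun hkl => Submodule.finrank_mono (hWmono hkl)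
  have hr0 : r 0 = 0 := by
    have h1 : Set.Icc (1:ℕ) 0 = ∅ := Set.Icc_eq_empty (by omega)
    show Module.finrank ℝ (Submodule.span ℝ (v '' Set.Icc 1 0)) = 0
    rw [h1]
    simp
  have hrN : r N = d := by
    have hWN : W N = ⊤ := htop
    show Module.finrank ℝ (W N) = d
    rw [hWN, finrank_top]
    exact Module.finrank_fin_fun ℝ
  have hstep : ∀ k, r (k+1) ≤ r k + 1 := by
    intro k
    by_cases hmem : v (k+1) ∈ W k
    · have h1 : W (k+1) = W k := by
        show Submodule.span ℝ (v '' Set.Icc 1 (k+1)) = _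
        rw [hIcc k, Set.image_insert_eq, Submodule.span_insert_eq_span hmem]
      show Module.finrank ℝ (W (k+1)) ≤ Module.finrank ℝ (W k) + 1
      rw [h1]
      omega
    · have hne : v (k+1) ≠ 0 := fun h => hmem (h ▸ (W k).zero_mem)
      show Module.finrank ℝ (W (k+1)) ≤ Module.finrank ℝ (W k) + 1
      rw [hWsucc k]
      calc Module.finrank ℝ ↥(Submodule.span ℝ {v (k+1)} ⊔ W k)
          ≤ Module.finrank ℝ ↥(Submodule.span ℝ {v (k+1)}) + Module.finrank ℝ ↥(W k) :=
            Submodule.finrank_add_le_finrank_add_finrank _ _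
        _ = 1 + Module.finrank ℝ (W k) := by rw [finrank_span_singleton hne]
        _ = Module.finrank ℝ (W k) + 1 := by omega
  have hex : ∀ i : Fin d, ∃ k, (i : ℕ) + 1 ≤ r k := fun i => ⟨N, by rw [hrN]; omega⟩
  let nv : Fin d → ℕ := fun i => Nat.find (hex i)
  have hspec : ∀ i : Fin d, (i : ℕ) + 1 ≤ r (nv i) := fun i => Nat.find_spec (hex i)
  have hmin' : ∀ (i : Fin d) (k : ℕ), k < nv i → r k ≤ (i : ℕ) := by
    intro i k hk
    have := Nat.find_min (hex i) hk
    omega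
  have hpos : ∀ i, 1 ≤ nv i := by
    intro i
    rcases Nat.eq_zero_or_pos (nv i) with h | h
    · exfalso; have h2 := hspec i; rw [h, hr0] at h2; omega
    · omega
  have hrval : ∀ i : Fin d, r (nv i) = (i : ℕ) + 1 := by
    intro i
    have h1 : nv i - 1 < nv i := by have := hpos i; omega
    have h2 : r (nv i - 1) ≤ (i : ℕ) := hmin' i _ h1
    have h3 : r (nv i) ≤ r (nv i - 1) + 1 := by
      have h4 := hstep (nv i - 1)
      have h5 : nv i - 1 + 1 = nv i := by have := hpos i; omega
      rwa [h5] at h4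
    have := hspec i
    omega
  have hsm : StrictMono nv := by
    intro i j hij
    by_contra h
    push_neg at h
    have h1 : r (nv j) ≤ r (nv i) := hrmono h
    rw [hrval i, hrval j] at h1
    have h2 : (i : ℕ) < (j : ℕ) := hij
    omega
  have hleN : ∀ i, nv i ≤ N := fun i => Nat.find_le (by rw [hrN]; omega)
  have hmax : ∃ i, nv i = N := by
    refine ⟨⟨d - 1, by omega⟩, ?_⟩
    by_contra h
    have hle := hleN ⟨d - 1, by omega⟩
    have h1 : nv ⟨d - 1, by omega⟩ ≤ N - 1 := by omega
    have hco : ((⟨d - 1, by omega⟩ : Fin d) : ℕ) = d - 1 := rfl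
    have h2 : (d - 1 : ℕ) + 1 ≤ r (N - 1) := by
      have := le_trans (hspec ⟨d - 1, by omega⟩) (hrmono h1)
      rwa [hco] at this
    have h3 : r (N - 1) ≤ d := by
      have := hrmono (show N - 1 ≤ N by omega); rw [hrN] at this; exact this
    have h4 : r (N - 1) = d := by omega
    apply hproper
    apply Submodule.eq_top_of_finrank_eq
    show r (N-1) = Module.finrank ℝ (Fin d → ℝ)
    rw [h4, Module.finrank_fin_fun ℝ]
  let w : Fin d → (Fin d → ℝ) := fun i => v (nv i)
  have hclaim : ∀ k, k ≤ N → W k ≤ Submodule.span ℝ (w '' {j : Fin d | nv j ≤ k}) := by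
    intro k
    induction k with
    | zero =>
      intro _
      have h1 : Set.Icc (1:ℕ) 0 = ∅ := Set.Icc_eq_empty (by omega)
      show Submodule.span ℝ (v '' Set.Icc 1 0) ≤ _
      rw [h1]
      simp
    | succ k ih =>
      intro hk
      rw [hWsucc k]
      apply sup_le
      · rw [Submodule.span_singleton_le_iff_mem]
        by_cases hmem : v (k+1) ∈ W k
        · exact Submodule.span_mono (Set.image_mono (fun j hj => by
            simp only [Set.mem_setOf_eq] at *; omega)) (ih (by omega) hmem)
        · have hlt : W k < W (k+1) := by
            refine lt_of_le_of_ne (hWmono (by omega)) (fun h => hmem ?_)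
            rw [h, hWsucc k]
            exact Submodule.mem_sup_left (Submodule.mem_span_singleton_self _)
          have hrlt : r k < r (k+1) := Submodule.finrank_lt_finrank_of_lt hlt
          have hrkd : r k < d := by
            have := hrmono hk; rw [hrN] at this; omega
          have hnvi : nv (⟨r k, hrkd⟩ : Fin d) = k + 1 := by
            have hle : nv (⟨r k, hrkd⟩ : Fin d) ≤ k + 1 :=
              Nat.find_le (show ((⟨r k, hrkd⟩ : Fin d) : ℕ) + 1 ≤ r (k+1) by
                show r k + 1 ≤ r (k+1); omega)
            rcases Nat.lt_or_ge (nv (⟨r k, hrkd⟩ : Fin d)) (k+1) with h | h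
            · exfalso
              have h1 := hspec (⟨r k, hrkd⟩ : Fin d)
              have h2 : r (nv (⟨r k, hrkd⟩ : Fin d)) ≤ r k := hrmono (by omega)
              have h3 : ((⟨r k, hrkd⟩ : Fin d) : ℕ) = r k := rfl
              rw [h3] at h1; omega
            · omega
          apply Submodule.subset_span
          exact ⟨⟨r k, hrkd⟩, hnvi.le, by
            show v (nv _) = v (k+1); rw [hnvi]⟩
      · exact le_trans (ih (by omega)) (Submodule.span_mono (Set.image_mono (fun j hj => by
          simp only [Set.mem_setOf_eq] at *; omega)))
  have htople : ⊤ ≤ Submodule.span ℝ (Set.range w) := by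
    rw [← htop]
    refine le_trans (hclaim N le_rfl) (Submodule.span_mono ?_)
    exact Set.image_subset_range _ _
  have hcard : Fintype.card (Fin d) = Module.finrank ℝ (Fin d → ℝ) := by
    rw [Module.finrank_fin_fun ℝ, Fintype.card_fin]
  let bs : Module.Basis (Fin d) ℝ (Fin d → ℝ) := basisOfTopLeSpanOfCardEqFinrank w htople hcard
  have hbscoe : ∀ i, bs i = w i := fun i =>
    congrFun (coe_basisOfTopLeSpanOfCardEqFinrank w htople hcard) i
  refine ⟨nv, bs, hsm, hpos, hleN, hmax, fun i => hbscoe i, ?_⟩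
  intro i k hk1 hki
  have hkN : k ≤ N := le_trans (le_of_lt hki) (hleN i)
  have hvk : v k ∈ W k := Submodule.subset_span ⟨k, ⟨hk1, le_rfl⟩, rfl⟩
  have hsub : {j : Fin d | nv j ≤ k} ⊆ {j : Fin d | j < i} := by
    intro j hj
    simp only [Set.mem_setOf_eq] at *
    have h1 : nv j < nv i := by omega
    exact hsm.lt_iff_lt.mp h1
  have hmem2 : v k ∈ Submodule.span ℝ (⇑bs '' {j : Fin d | j < i}) := by
    have h1 := hclaim k hkN hvk
    have h2 : Submodule.span ℝ (w '' {j : Fin d | nv j ≤ k})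
        ≤ Submodule.span ℝ (⇑bs '' {j : Fin d | j < i}) := by
      apply Submodule.span_mono
      rintro x ⟨j, hj, hjx⟩
      exact ⟨j, hsub hj, by rw [hbscoe j]; exact hjx⟩
    exact h2 h1
  have hsupp := (Module.Basis.mem_span_image bs).mp hmem2
  by_contra hne
  have h1 : i ∈ ((bs.repr (v k)).support : Set (Fin d)) := by
    simp only [Finset.coe_sort_coe, Finset.mem_coe, Finsupp.mem_support_iff]
    exact hne
  have h2 := hsupp h1
  simp only [Set.mem_setOf_eq, lt_irrefl] at h2

private noncomputable def hadT (k : ℕ) (h : ℝ → ℝ) (t : ℝ) : ℝ :=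
  ∫ x in (0:ℝ)..1, x ^ k * h (x * t)

private lemma hadT_mem {a b : ℝ} (ha : a ≤ 0) (hb : 0 ≤ b) {t x : ℝ} (ht : t ∈ Set.Icc a b)
    (hx : x ∈ Set.Icc (0:ℝ) 1) : x * t ∈ Set.Icc a b := by
  obtain ⟨h1, h2⟩ := ht
  obtain ⟨h3, h4⟩ := hx
  constructor
  · nlinarith [mul_nonneg h3 (sub_nonneg.2 h1), mul_nonneg (sub_nonneg.2 h4) (neg_nonneg.2 ha)]
  · nlinarith [mul_nonneg h3 (sub_nonneg.2 h2), mul_nonneg (sub_nonneg.2 h4) hb]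

private lemma hadT_integrable {a b : ℝ} (ha : a ≤ 0) (hb : 0 ≤ b) (k : ℕ) {h : ℝ → ℝ}
    (hc : ContinuousOn h (Set.Icc a b)) {t : ℝ} (ht : t ∈ Set.Icc a b) :
    IntervalIntegrable (fun x => x ^ k * h (x * t)) MeasureTheory.volume 0 1 := by
  apply ContinuousOn.intervalIntegrable
  rw [Set.uIcc_of_le zero_le_one]
  exact (continuous_pow k).continuousOn.mul (hc.comp (continuousOn_id.mul continuousOn_const)
    (fun x hx => hadT_mem ha hb ht hx))

private lemma hadT_hasDerivWithinAt {a b : ℝ} (ha : a ≤ 0) (hb : 0 ≤ b) (k : ℕ) {h h' : ℝ → ℝ}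
    (hh : ∀ z ∈ Set.Icc a b, HasDerivWithinAt h (h' z) (Set.Icc a b) z)
    (hc : ContinuousOn h' (Set.Icc a b)) {t0 : ℝ} (ht0 : t0 ∈ Set.Icc a b) :
    HasDerivWithinAt (hadT k h) (hadT (k+1) h' t0) (Set.Icc a b) t0 := by
  have hhc : ContinuousOn h (Set.Icc a b) := fun z hz => (hh z hz).continuousWithinAt
  rw [hasDerivWithinAt_iff_isLittleO]
  refine Asymptotics.IsLittleO.of_bound fun ε hε => ?_
  have huc : UniformContinuousOn h' (Set.Icc a b) :=
    isCompact_Icc.uniformContinuousOn_of_continuous hc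
  obtain ⟨δ, hδ, hδε⟩ := Metric.uniformContinuousOn_iff.mp huc ε hε
  filter_upwards [self_mem_nhdsWithin,
    mem_nhdsWithin_of_mem_nhds (Metric.ball_mem_nhds t0 hδ)] with t ht htb
  have hdt : |t - t0| < δ := by rw [← Real.dist_eq]; exact htb
  have i1 := hadT_integrable ha hb k hhc ht
  have i2 := hadT_integrable ha hb k hhc ht0
  have i3 := (hadT_integrable ha hb (k+1) hc ht0).const_mul (t - t0)
  have heq : hadT k h t - hadT k h t0 - (t - t0) • hadT (k+1) h' t0
      = ∫ x in (0:ℝ)..1, (x ^ k * h (x * t) - x ^ k * h (x * t0)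
          - (t - t0) * (x ^ (k+1) * h' (x * t0))) := by
    unfold hadT
    rw [intervalIntegral.integral_sub (i1.sub i2) i3, intervalIntegral.integral_sub i1 i2,
      intervalIntegral.integral_const_mul, smul_eq_mul]
  rw [heq]
  have hbound : ∀ x ∈ Set.uIoc (0:ℝ) 1, ‖x ^ k * h (x * t) - x ^ k * h (x * t0)
      - (t - t0) * (x ^ (k+1) * h' (x * t0))‖ ≤ ε * ‖t - t0‖ := by
    intro x hx
    rw [Set.uIoc_of_le zero_le_one] at hx
    have hx' : x ∈ Set.Icc (0:ℝ) 1 := ⟨hx.1.le, hx.2⟩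
    have hy0 : x * t0 ∈ Set.Icc a b := hadT_mem ha hb ht0 hx'
    have hy : x * t ∈ Set.Icc a b := hadT_mem ha hb ht hx'
    have hyy : |x * t - x * t0| ≤ |t - t0| := by
      rw [← mul_sub, abs_mul, abs_of_nonneg hx'.1]
      exact mul_le_of_le_one_left (abs_nonneg _) hx'.2
    have hmvt := Convex.norm_image_sub_le_of_norm_hasDerivWithin_le
      (f := fun z => h z - z * h' (x * t0)) (f' := fun z => h' z - h' (x * t0))
      (s := Set.Icc a b ∩ Metric.closedBall (x * t0) |t - t0|) (C := ε)
      (fun z hz => (((hh z hz.1).mono Set.inter_subset_left).sub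
        ((hasDerivWithinAt_id z _).mul_const (h' (x * t0)))).congr_deriv (by ring))
      (fun z hz => by
        have := hδε z hz.1 (x * t0) hy0
          (lt_of_le_of_lt (Metric.mem_closedBall.mp hz.2) hdt)
        rw [Real.dist_eq] at this
        rw [Real.norm_eq_abs]
        exact this.le)
      ((convex_Icc a b).inter (convex_closedBall _ _))
      ⟨hy0, Metric.mem_closedBall_self (abs_nonneg _)⟩
      ⟨hy, by rw [Metric.mem_closedBall, Real.dist_eq]; exact hyy⟩
    have hxk : |x ^ k| ≤ 1 := by
      rw [abs_of_nonneg (pow_nonneg hx'.1 k)]; exact pow_le_one₀ hx'.1 hx'.2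
    have hid : x ^ k * h (x * t) - x ^ k * h (x * t0) - (t - t0) * (x ^ (k+1) * h' (x * t0))
        = x ^ k * ((h (x * t) - x * t * h' (x * t0)) - (h (x * t0) - x * t0 * h' (x * t0))) := by
      ring
    rw [hid, norm_mul]
    simp only [Real.norm_eq_abs] at hmvt ⊢
    calc |x ^ k| * |(h (x * t) - x * t * h' (x * t0)) - (h (x * t0) - x * t0 * h' (x * t0))|
        ≤ 1 * (ε * |x * t - x * t0|) := mul_le_mul hxk hmvt (abs_nonneg _) zero_le_one
      _ ≤ ε * |t - t0| := by rw [one_mul]; exact mul_le_mul_of_nonneg_left hyy hε.le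
  have := intervalIntegral.norm_integral_le_of_norm_le_const hbound
  simpa using this

private lemma hadT_contDiffOn {a b : ℝ} (ha : a ≤ 0) (hb : 0 ≤ b) (hab : a < b) :
    ∀ n : ℕ, ∀ k : ℕ, ∀ h : ℝ → ℝ, ContDiffOn ℝ ∞ h (Set.Icc a b) →
      ContDiffOn ℝ n (hadT k h) (Set.Icc a b) := by
  have hs : UniqueDiffOn ℝ (Set.Icc a b) := uniqueDiffOn_Icc hab
  have hD : ∀ k : ℕ, ∀ h : ℝ → ℝ, ContDiffOn ℝ ∞ h (Set.Icc a b) → ∀ t ∈ Set.Icc a b,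
      HasDerivWithinAt (hadT k h) (hadT (k+1) (derivWithin h (Set.Icc a b)) t)
        (Set.Icc a b) t := by
    intro k h hh t ht
    exact hadT_hasDerivWithinAt ha hb k
      (fun z hz => ((hh.differentiableOn (by simp)) z hz).hasDerivWithinAt)
      (hh.continuousOn_derivWithin hs (by simp)) ht
  intro n
  induction n with
  | zero =>
    intro k h hh
    exact contDiffOn_zero.mpr fun t ht => (hD k h hh t ht).continuousWithinAt
  | succ n ih =>
    intro k h hh
    rw [Nat.cast_succ, contDiffOn_succ_iff_derivWithin hs]
    refine ⟨fun t ht => (hD k h hh t ht).differentiableWithinAt, by simp, ?_⟩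
    refine (ih (k+1) (derivWithin h (Set.Icc a b)) (hh.derivWithin hs (le_of_eq rfl))).congr ?_
    intro t ht
    exact (hD k h hh t ht).derivWithin (hs t ht)

private lemma hadT_iteratedDerivWithin {a b : ℝ} (ha : a ≤ 0) (hb : 0 ≤ b) (hab : a < b) :
    ∀ m : ℕ, ∀ k : ℕ, ∀ h : ℝ → ℝ, ContDiffOn ℝ ∞ h (Set.Icc a b) → ∀ t ∈ Set.Icc a b,
      iteratedDerivWithin m (hadT k h) (Set.Icc a b) t
        = hadT (k+m) (iteratedDerivWithin m h (Set.Icc a b)) t := by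
  have hs : UniqueDiffOn ℝ (Set.Icc a b) := uniqueDiffOn_Icc hab
  intro m
  induction m with
  | zero => intro k h hh t ht; simp
  | succ m ih =>
    intro k h hh t ht
    rw [iteratedDerivWithin_succ', iteratedDerivWithin_succ']
    have hcongr : Set.EqOn (derivWithin (hadT k h) (Set.Icc a b))
        (hadT (k+1) (derivWithin h (Set.Icc a b))) (Set.Icc a b) := fun t ht =>
      (hadT_hasDerivWithinAt ha hb k
        (fun z hz => ((hh.differentiableOn (by simp)) z hz).hasDerivWithinAt)
        (hh.continuousOn_derivWithin hs (by simp)) ht).derivWithin (hs t ht)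
    rw [iteratedDerivWithin_congr hcongr ht, ih (k+1) _ (hh.derivWithin hs (le_of_eq rfl)) t ht]
    rw [show k + 1 + m = k + (m + 1) by omega]

private lemma hadT_zero (k : ℕ) (h : ℝ → ℝ) : hadT k h 0 = h 0 / (k+1) := by
  unfold hadT
  simp only [mul_zero]
  rw [intervalIntegral.integral_mul_const, integral_pow]
  field_simp
  simp

private lemma hadamard_step {a b : ℝ} (ha : a ≤ 0) (hb : 0 ≤ b) (hab : a < b) {f : ℝ → ℝ}
    (hf : ContDiffOn ℝ ∞ f (Set.Icc a b)) (hf0 : f 0 = 0) :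
    ∃ g : ℝ → ℝ, ContDiffOn ℝ ∞ g (Set.Icc a b) ∧ (∀ t ∈ Set.Icc a b, f t = t * g t) ∧
      ∀ m : ℕ, iteratedDerivWithin m g (Set.Icc a b) 0
        = iteratedDerivWithin (m+1) f (Set.Icc a b) 0 / (m+1) := by
  have hs : UniqueDiffOn ℝ (Set.Icc a b) := uniqueDiffOn_Icc hab
  have h0s : (0:ℝ) ∈ Set.Icc a b := ⟨ha, hb⟩
  have hf'c : ContDiffOn ℝ ∞ (derivWithin f (Set.Icc a b)) (Set.Icc a b) :=
    hf.derivWithin hs (le_of_eq rfl)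
  have hfd : ∀ z ∈ Set.Icc a b,
      HasDerivWithinAt f (derivWithin f (Set.Icc a b) z) (Set.Icc a b) z :=
    fun z hz => ((hf.differentiableOn (by simp)) z hz).hasDerivWithinAt
  have hftc : ∀ u ∈ Set.Icc a b, ∀ v ∈ Set.Icc a b, u ≤ v →
      ∫ x in u..v, derivWithin f (Set.Icc a b) x = f v - f u := by
    intro u hu v hv huv
    have hsub : Set.Icc u v ⊆ Set.Icc a b := Set.Icc_subset_Icc hu.1 hv.2
    apply intervalIntegral.integral_eq_sub_of_hasDerivAt_of_le huv (hf.continuousOn.mono hsub)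
    · intro x hx
      exact (hfd x (hsub (Set.Ioo_subset_Icc_self hx))).hasDerivAt
        (Icc_mem_nhds (lt_of_le_of_lt hu.1 hx.1) (lt_of_lt_of_le hx.2 hv.2))
    · apply ContinuousOn.intervalIntegrable
      rw [Set.uIcc_of_le huv]
      exact hf'c.continuousOn.mono hsub
  refine ⟨hadT 0 (derivWithin f (Set.Icc a b)),
    contDiffOn_infty.mpr fun n => hadT_contDiffOn ha hb hab n 0 _ hf'c, ?_, ?_⟩
  · intro t ht
    by_cases ht0 : t = 0
    · rw [ht0, hf0, zero_mul]
    · have h1 : hadT 0 (derivWithin f (Set.Icc a b)) t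
          = t⁻¹ * ∫ x in (0:ℝ)..t, derivWithin f (Set.Icc a b) x := by
        unfold hadT
        simp only [pow_zero, one_mul]
        rw [intervalIntegral.integral_comp_mul_right _ ht0, zero_mul, one_mul, smul_eq_mul]
      have h2 : ∫ x in (0:ℝ)..t, derivWithin f (Set.Icc a b) x = f t := by
        rcases le_total 0 t with h | h
        · rw [hftc 0 h0s t ht h, hf0, sub_zero]
        · rw [intervalIntegral.integral_symm, hftc t ht 0 h0s h, hf0]; ring
      rw [h1, h2]
      field_simp
  · intro m
    rw [hadT_iteratedDerivWithin ha hb hab m 0 _ hf'c 0 h0s, hadT_zero,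
      iteratedDerivWithin_succ']
    simp

private lemma smooth_div_pow {a b : ℝ} (ha : a ≤ 0) (hb : 0 ≤ b) (hab : a < b) :
    ∀ n : ℕ, ∀ f : ℝ → ℝ, ContDiffOn ℝ ∞ f (Set.Icc a b) →
      (∀ j < n, iteratedDerivWithin j f (Set.Icc a b) 0 = 0) →
      ∃ G : ℝ → ℝ, ContDiffOn ℝ ∞ G (Set.Icc a b) ∧ (∀ t ∈ Set.Icc a b, f t = t ^ n * G t) ∧
        ∀ m : ℕ, iteratedDerivWithin m G (Set.Icc a b) 0
          = iteratedDerivWithin (m+n) f (Set.Icc a b) 0 * (Nat.factorial m : ℝ)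
            / (Nat.factorial (m+n) : ℝ) := by
  intro n
  induction n with
  | zero =>
    intro f hf _
    refine ⟨f, hf, fun t _ => by simp, fun m => ?_⟩
    rw [Nat.add_zero]
    field_simp
  | succ n ih =>
    intro f hf hvan
    have hf0 : f 0 = 0 := by
      have := hvan 0 (Nat.succ_pos n)
      rwa [iteratedDerivWithin_zero] at this
    obtain ⟨g, hg, hfg, hgd⟩ := hadamard_step ha hb hab hf hf0
    have hgvan : ∀ j < n, iteratedDerivWithin j g (Set.Icc a b) 0 = 0 := by
      intro j hj
      rw [hgd j, hvan (j+1) (by omega), zero_div]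
    obtain ⟨G, hG, hgG, hGd⟩ := ih g hg hgvan
    refine ⟨G, hG, fun t ht => by rw [hfg t ht, hgG t ht]; ring, fun m => ?_⟩
    rw [hGd m, hgd (m+n), show m + (n+1) = m + n + 1 by omega, Nat.factorial_succ]
    push_cast
    field_simp

theorem stmt17 (d : ℕ) (hd : 0 < d) (a b : ℝ) (ha : a ≤ 0) (hb : 0 ≤ b) (hab : a < b)
    (N : ℕ) (Θ : ℝ → (Fin d → ℝ)) (hΘ : ContDiffOn ℝ (⊤ : ℕ∞) Θ (Set.Icc a b))
    (hΘ0 : Θ 0 = 0)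
    (htype : ∀ u : Fin d → ℝ, u ≠ 0 → ∃ k, 1 ≤ k ∧ k ≤ N ∧
      ∑ i, u i * iteratedDerivWithin k Θ (Set.Icc a b) 0 i ≠ 0)
    (hmin : ∀ N' : ℕ, (∀ u : Fin d → ℝ, u ≠ 0 → ∃ k, 1 ≤ k ∧ k ≤ N' ∧
      ∑ i, u i * iteratedDerivWithin k Θ (Set.Icc a b) 0 i ≠ 0) → N ≤ N') :
    ∃ L : (Fin d → ℝ) ≃ₗ[ℝ] (Fin d → ℝ), ∃ nv : Fin d → ℕ, ∃ φ : Fin d → ℝ → ℝ,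
      StrictMono nv ∧ (∀ i, 1 ≤ nv i) ∧ (∀ i, nv i ≤ N) ∧ (∃ i, nv i = N) ∧
      (∀ i, ContDiffOn ℝ (⊤ : ℕ∞) (φ i) (Set.Icc a b)) ∧ (∀ i, φ i 0 = 1) ∧
      (∀ t ∈ Set.Icc a b, ∀ i, L (Θ t) i = t ^ nv i * φ i t) := by
  classical
  have hs : UniqueDiffOn ℝ (Set.Icc a b) := uniqueDiffOn_Icc hab
  have h0s : (0:ℝ) ∈ Set.Icc a b := ⟨ha, hb⟩
  let v : ℕ → (Fin d → ℝ) := fun k => iteratedDerivWithin k Θ (Set.Icc a b) 0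
  have hN1 : 1 ≤ N := by
    obtain ⟨k, hk1, hkN, -⟩ := htype (Pi.single ⟨0, hd⟩ 1) (by
      intro h
      have h1 := congrFun h ⟨0, hd⟩
      simpa using h1)
    omega
  have hdot : ∀ (u : Fin d → ℝ), (∑ i, u i * u i = 0) → u = 0 := by
    intro u hsum
    funext j
    have h1 : ∀ i ∈ Finset.univ, (0:ℝ) ≤ u i * u i := fun i _ => mul_self_nonneg _
    have h2 := (Finset.sum_eq_zero_iff_of_nonneg h1).mp hsum j (Finset.mem_univ j)
    simpa using mul_self_eq_zero.mp h2
  have htop : Submodule.span ℝ (v '' Set.Icc 1 N) = ⊤ := by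
    by_contra hne
    obtain ⟨φ, hφ0, hφmap⟩ := Submodule.exists_dual_map_eq_bot_of_lt_top
      (lt_top_iff_ne_top.mpr hne) inferInstance
    let u : Fin d → ℝ := fun j => φ (Pi.single j 1)
    have hφx : ∀ x : Fin d → ℝ, φ x = ∑ j, u j * x j := by
      intro x
      have h1 : x = ∑ j, x j • (Pi.single j 1 : Fin d → ℝ) := by
        funext m
        simp [Pi.single_apply]
      conv_lhs => rw [h1]
      rw [map_sum]
      refine Finset.sum_congr rfl fun j _ => ?_
      rw [map_smul]
      simp [u, smul_eq_mul, mul_comm]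
    have hune : u ≠ 0 := by
      intro h
      apply hφ0
      apply LinearMap.ext
      intro x
      rw [hφx x, h]
      simp
    obtain ⟨k, hk1, hkN, hsum⟩ := htype u hune
    apply hsum
    have hmem : v k ∈ Submodule.span ℝ (v '' Set.Icc 1 N) :=
      Submodule.subset_span ⟨k, ⟨hk1, hkN⟩, rfl⟩
    have h2 : φ (v k) = 0 := by
      have h3 : φ (v k) ∈ Submodule.map φ (Submodule.span ℝ (v '' Set.Icc 1 N)) :=
        Submodule.mem_map_of_mem hmem
      rw [hφmap] at h3
      simpa using h3
    rw [hφx (v k)] at h2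
    exact h2
  have hproper : Submodule.span ℝ (v '' Set.Icc 1 (N-1)) ≠ ⊤ := by
    intro htopc
    have hN' : ∀ u : Fin d → ℝ, u ≠ 0 → ∃ k, 1 ≤ k ∧ k ≤ N - 1 ∧
        ∑ i, u i * iteratedDerivWithin k Θ (Set.Icc a b) 0 i ≠ 0 := by
      intro u hu
      by_contra hcon
      push_neg at hcon
      let ψ : (Fin d → ℝ) →ₗ[ℝ] ℝ := ∑ i, u i • (LinearMap.proj i)
      have hψ : ∀ x, ψ x = ∑ i, u i * x i := by
        intro x
        simp [ψ, LinearMap.sum_apply, LinearMap.smul_apply, LinearMap.proj_apply, smul_eq_mul]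
      have hker : Submodule.span ℝ (v '' Set.Icc 1 (N-1)) ≤ LinearMap.ker ψ := by
        rw [Submodule.span_le]
        rintro x ⟨k, ⟨hk1, hkN⟩, rfl⟩
        simp only [SetLike.mem_coe, LinearMap.mem_ker]
        rw [hψ]
        exact hcon k hk1 hkN
      have h4 : ψ u = 0 := by
        have h5 : u ∈ LinearMap.ker ψ := hker (htopc ▸ Submodule.mem_top)
        simpa using h5
      rw [hψ] at h4
      exact hu (hdot u h4)
    have := hmin (N-1) hN'
    omega
  obtain ⟨nv, bs, hsm, hpos, hleN, hmaxex, hbsv, hrepr⟩ := exists_flag_basis hd N hN1 v htop hproper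
  let c : Fin d → ℝ := fun i => (Nat.factorial (nv i) : ℝ)
  have hc : ∀ i, c i ≠ 0 := fun i => Nat.cast_ne_zero.mpr (Nat.factorial_ne_zero _)
  let Dsc : (Fin d → ℝ) ≃ₗ[ℝ] (Fin d → ℝ) :=
    { toFun := fun x i => c i * x i
      invFun := fun x i => (c i)⁻¹ * x i
      map_add' := by intro x y; funext i; simp [Pi.add_apply]; ring
      map_smul' := by intro m x; funext i; simp [Pi.smul_apply, smul_eq_mul]; ring
      left_inv := by intro x; funext i; simp; field_simp; exact mul_div_cancel_left₀ (x i) (hc i)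
      right_inv := by intro x; funext i; simp; field_simp; exact mul_div_cancel_left₀ (x i) (hc i) }
  let L : (Fin d → ℝ) ≃ₗ[ℝ] (Fin d → ℝ) := bs.equivFun.trans Dsc
  have hL : ∀ x i, L x i = c i * bs.repr x i := by
    intro x i
    show Dsc (bs.equivFun x) i = c i * bs.repr x i
    show c i * (bs.equivFun x i) = c i * bs.repr x i
    rw [Module.Basis.equivFun_apply]
  have key : ∀ i : Fin d, ∃ φi : ℝ → ℝ, ContDiffOn ℝ (⊤ : ℕ∞) φi (Set.Icc a b) ∧ φi 0 = 1 ∧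
      ∀ t ∈ Set.Icc a b, L (Θ t) i = t ^ nv i * φi t := by
    intro i
    let ℓ : (Fin d → ℝ) →L[ℝ] ℝ :=
      LinearMap.toContinuousLinearMap ((LinearMap.proj i).comp (L : (Fin d → ℝ) →ₗ[ℝ] (Fin d → ℝ)))
    have hℓ : ∀ x, ℓ x = L x i := by
      intro x
      show ((LinearMap.proj i).comp (L : (Fin d → ℝ) →ₗ[ℝ] (Fin d → ℝ))) x = L x i
      simp [LinearMap.proj_apply]
    have hfc : ContDiffOn ℝ (⊤ : ℕ∞) (fun t => ℓ (Θ t)) (Set.Icc a b) := ℓ.contDiff.comp_contDiffOn hΘ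
    have hder : ∀ k, iteratedDerivWithin k (fun t => ℓ (Θ t)) (Set.Icc a b) 0 = ℓ (v k) :=
      fun k => iteratedDerivWithin_clm_comp ℓ hΘ hs h0s k
    have hvan : ∀ j, j < nv i → iteratedDerivWithin j (fun t => ℓ (Θ t)) (Set.Icc a b) 0 = 0 := by
      intro j hj
      rw [hder j]
      rcases Nat.eq_zero_or_pos j with rfl | hj1
      · have h1 : v 0 = 0 := by
          show iteratedDerivWithin 0 Θ (Set.Icc a b) 0 = 0
          rw [iteratedDerivWithin_zero, hΘ0]
        rw [h1, map_zero]
      · rw [hℓ, hL, hrepr i j hj1 hj, mul_zero]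
    have hvalN : iteratedDerivWithin (nv i) (fun t => ℓ (Θ t)) (Set.Icc a b) 0 = c i := by
      rw [hder, hℓ, hL, ← hbsv i, Module.Basis.repr_self]
      simp
    obtain ⟨G, hGon, hGfac, hGd⟩ := smooth_div_pow ha hb hab (nv i) _ hfc hvan
    have hG1 : G 0 = 1 := by
      have h1 := hGd 0
      rw [iteratedDerivWithin_zero, Nat.zero_add, hvalN] at h1
      rw [h1, Nat.factorial_zero, Nat.cast_one, mul_one]
      exact div_self (hc i)
    refine ⟨G, hGon, hG1, ?_⟩
    intro t ht
    have h2 : L (Θ t) i = ℓ (Θ t) := (hℓ _).symm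
    rw [h2, hGfac t ht]
  choose φ hφ1 hφ2 hφ3 using key
  exact ⟨L, nv, φ, hsm, hpos, hleN, hmaxex, hφ1, hφ2, fun t ht i => hφ3 i t ht⟩
end
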